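/- (Two-layer hierarchical model, unsupervised SymmPI.) Fix K, M ≥ 1, α ∈ [0,1], and a constant c ≥ 0. Let Z = (Z_i^{(k)})_{k∈[K], i∈[M]} be a real random array whose joint law is Λ_{K,M}-distributionally invariant. Define Z̄_k := (1/M)Σ_{j=1}^M Z_j^{(k)}; σ̂_k := 1 if M = 1 and σ̂_k := sqrt( (1/(M−1)) Σ_{j=1}^M (Z_j^{(k)} − Z̄_k)² ) otherwise; Z̄ := (1/K)Σ_{k=1}^K Z̄_k; the event A_{k,c} := {|Z̄_k − Z̄| ≤ c σ̂_k/√M}; and Z̃_i^{(k)} := |Z_i^{(k)} − ( Z̄·1_{A_{k,c}} + Z̄_k·1_{A_{k,c}^∁} )| / σ̂_k (with the convention x/0 := 0). Then P( Z̃_M^{(K)} ≤ Q_{1−α}( (Z̃_i^{(k)})_{k∈[K], i∈[M]} ) ) ≥ 1 − α. If moreover the KM random variables Z̃_i^{(k)} are almost surely pairwise distinct (as holds when Z̃ has a continuous distribution), then this probability is at most 1 − α + 1/(KM). -/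
import Mathlib


open MeasureTheory ProbabilityTheory

noncomputable section TwoLayer

variable {K M : ℕ}

/-- Within-branch mean `Z̄_k = (1/M) Σ_j Z_j^{(k)}`. -/
def branchMean (z : Fin K → Fin M → ℝ) (k : Fin K) : ℝ :=
  (∑ j, z k j) / (M : ℝ)

/-- Within-branch standard deviation `σ̂_k` (set to `1` when `M = 1`). -/
def branchSd (z : Fin K → Fin M → ℝ) (k : Fin K) : ℝ :=
  if M = 1 then 1
  else Real.sqrt ((∑ j, (z k j - branchMean z k) ^ 2) / ((M : ℝ) - 1))

/-- Grand mean `Z̄ = (1/K) Σ_k Z̄_k`. -/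
def grandMean (z : Fin K → Fin M → ℝ) : ℝ :=
  (∑ k, branchMean z k) / (K : ℝ)

/-- The SymmPI transformed value
`Z̃_i^{(k)} = |Z_i^{(k)} − (Z̄·1_{A_{k,c}} + Z̄_k·1_{A_{k,c}^∁})| / σ̂_k`, where
`A_{k,c} = {|Z̄_k − Z̄| ≤ c σ̂_k/√M}` (with the convention `x/0 := 0`). -/
def tildeZ (c : ℝ) (z : Fin K → Fin M → ℝ) (k : Fin K) (i : Fin M) : ℝ :=
  |z k i -
      (if |branchMean z k - grandMean z| ≤ c * branchSd z k / Real.sqrt M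
        then grandMean z else branchMean z k)| / branchSd z k

/-- The empirical `(1−α)`-quantile of a finite family of reals:
`Q_{1−α}(v) := inf{x : #{j : v_j ≤ x}/N ≥ 1−α}`. -/
def empQuantile {ι : Type*} [Fintype ι] (α : ℝ) (v : ι → ℝ) : ℝ :=
  sInf {x : ℝ | 1 - α ≤ ({j : ι | v j ≤ x}.ncard : ℝ) / (Fintype.card ι : ℝ)}

end TwoLayer

noncomputable section QuantAux

variable {ι : Type*} [Fintype ι]

def cnt (v : ι → ℝ) (x : ℝ) : ℕ := (Finset.univ.filter (fun j => v j ≤ x)).card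

def qSet (α : ℝ) (v : ι → ℝ) : Set ℝ :=
  {x : ℝ | 1 - α ≤ (cnt v x : ℝ) / (Fintype.card ι : ℝ)}

lemma ncard_eq_cnt (v : ι → ℝ) (x : ℝ) : ({j | v j ≤ x}.ncard) = cnt v x := by
  rw [show {j | v j ≤ x} = ↑(Finset.univ.filter (fun j => v j ≤ x)) by ext j; simp,
    Set.ncard_coe_finset]
  rfl

lemma empQuantile_eq (α : ℝ) (v : ι → ℝ) : empQuantile α v = sInf (qSet α v) := by
  unfold empQuantile qSet
  simp only [ncard_eq_cnt]

lemma cnt_mono (v : ι → ℝ) {x y : ℝ} (h : x ≤ y) : cnt v x ≤ cnt v y := by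
  apply Finset.card_le_card
  intro j hj
  simp only [Finset.mem_filter] at *
  exact ⟨hj.1, hj.2.trans h⟩

lemma qSet_up (α : ℝ) (v : ι → ℝ) {x y : ℝ} (hx : x ∈ qSet α v) (hxy : x ≤ y) :
    y ∈ qSet α v := by
  simp only [qSet, Set.mem_setOf_eq] at hx ⊢
  refine hx.trans ?_
  gcongr
  exact_mod_cast cnt_mono v hxy

lemma qSet_nonempty [Nonempty ι] {α : ℝ} (hα0 : 0 ≤ α) (v : ι → ℝ) :
    (qSet α v).Nonempty := by
  classical
  refine ⟨Finset.univ.sup' Finset.univ_nonempty v, ?_⟩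
  have hcnt : cnt v (Finset.univ.sup' Finset.univ_nonempty v) = Fintype.card ι := by
    unfold cnt
    rw [Finset.filter_true_of_mem, Finset.card_univ]
    intro j _
    exact Finset.le_sup' v (Finset.mem_univ j)
  have hN : (0 : ℝ) < (Fintype.card ι : ℝ) := by
    exact_mod_cast Fintype.card_pos
  simp only [qSet, Set.mem_setOf_eq, hcnt, div_self hN.ne']
  linarith

lemma qSet_bddBelow [Nonempty ι] {α : ℝ} (hα1 : α < 1) (v : ι → ℝ) :
    BddBelow (qSet α v) := by
  classical
  refine ⟨Finset.univ.inf' Finset.univ_nonempty v, ?_⟩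
  intro x hx
  have hN : (0 : ℝ) < (Fintype.card ι : ℝ) := by exact_mod_cast Fintype.card_pos
  have h1 : (0 : ℝ) < (cnt v x : ℝ) / (Fintype.card ι : ℝ) :=
    lt_of_lt_of_le (by linarith) hx
  have h2 : 0 < cnt v x := by
    by_contra h
    push_neg at h
    interval_cases (cnt v x)
    norm_num at h1
  obtain ⟨j, hj⟩ := Finset.card_pos.mp h2
  simp only [Finset.mem_filter] at hj
  exact le_trans (Finset.inf'_le v (Finset.mem_univ j)) hj.2

lemma sInf_qSet_mem [Nonempty ι] {α : ℝ} (hα0 : 0 ≤ α) (hα1 : α < 1) (v : ι → ℝ) :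
    sInf (qSet α v) ∈ qSet α v := by
  classical
  set m := sInf (qSet α v) with hm
  have hne := qSet_nonempty hα0 v
  obtain ⟨x, hmx, hx⟩ : ∃ x, m < x ∧ ∀ j, v j ≤ x → v j ≤ m := by
    set T := (Finset.univ.image v).filter (fun y => m < y) with hT
    by_cases hTne : T.Nonempty
    · have hmT : m < T.min' hTne := (Finset.mem_filter.mp (T.min'_mem hTne)).2
      refine ⟨(m + T.min' hTne) / 2, by linarith, ?_⟩
      intro j hj
      by_contra hcon
      push_neg at hcon
      have hjT : v j ∈ T := Finset.mem_filter.mpr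
        ⟨Finset.mem_image_of_mem v (Finset.mem_univ j), hcon⟩
      have h1 : T.min' hTne ≤ v j := T.min'_le _ hjT
      linarith
    · refine ⟨m + 1, by linarith, ?_⟩
      intro j hj
      by_contra hcon
      push_neg at hcon
      exact hTne ⟨v j, Finset.mem_filter.mpr
        ⟨Finset.mem_image_of_mem v (Finset.mem_univ j), hcon⟩⟩
  obtain ⟨s, hs, hsx⟩ := exists_lt_of_csInf_lt hne (show sInf (qSet α v) < x from hmx)
  have hxS : x ∈ qSet α v := qSet_up α v hs hsx.le
  have hcc : cnt v x = cnt v m := by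
    unfold cnt
    congr 1
    apply Finset.filter_congr
    intro j _
    exact ⟨fun h => hx j h, fun h => h.trans hmx.le⟩
  simp only [qSet, Set.mem_setOf_eq] at hxS ⊢
  rwa [hcc] at hxS

lemma empQuantile_mem [Nonempty ι] {α : ℝ} (hα0 : 0 ≤ α) (hα1 : α < 1) (v : ι → ℝ) :
    empQuantile α v ∈ qSet α v := by
  rw [empQuantile_eq]; exact sInf_qSet_mem hα0 hα1 v

lemma empQuantile_le_iff [Nonempty ι] {α : ℝ} (hα0 : 0 ≤ α) (hα1 : α < 1) (v : ι → ℝ)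
    (a : ℝ) : empQuantile α v ≤ a ↔ a ∈ qSet α v := by
  constructor
  · intro h
    exact qSet_up α v (empQuantile_mem hα0 hα1 v) h
  · intro h
    rw [empQuantile_eq]
    exact csInf_le (qSet_bddBelow hα1 v) h

lemma cnt_quantile_lb [Nonempty ι] {α : ℝ} (hα0 : 0 ≤ α) (hα1 : α ≤ 1) (v : ι → ℝ) :
    (1 - α) * (Fintype.card ι : ℝ) ≤ (cnt v (empQuantile α v) : ℝ) := by
  rcases eq_or_lt_of_le hα1 with h | h
  · rw [h]
    norm_num
  · have hmem := empQuantile_mem hα0 h v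
    simp only [qSet, Set.mem_setOf_eq] at hmem
    have hN : (0 : ℝ) < (Fintype.card ι : ℝ) := by exact_mod_cast Fintype.card_pos
    exact (le_div_iff₀ hN).mp hmem

lemma card_fiber_le_one {v : ι → ℝ} (hinj : Function.Injective v) (t : ℝ) :
    (Finset.univ.filter (fun j => v j = t)).card ≤ 1 := by
  classical
  apply Finset.card_le_one.mpr
  intro a ha b hb
  simp only [Finset.mem_filter] at ha hb
  exact hinj (ha.2.trans hb.2.symm)

lemma cnt_quantile_ub [Nonempty ι] {α : ℝ} (hα0 : 0 ≤ α) (hα1 : α ≤ 1) (v : ι → ℝ)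
    (hinj : Function.Injective v) (hv : ∀ j, 0 ≤ v j) :
    (cnt v (empQuantile α v) : ℝ) ≤ (1 - α) * (Fintype.card ι : ℝ) + 1 := by
  classical
  have hN : (0 : ℝ) < (Fintype.card ι : ℝ) := by exact_mod_cast Fintype.card_pos
  have hNα : 0 ≤ (1 - α) * (Fintype.card ι : ℝ) := by
    have : 0 ≤ 1 - α := by linarith
    positivity
  have key : ∀ t : ℝ, (∀ j, v j ≤ t → v j = t) → (cnt v t : ℝ) ≤ 1 := by
    intro t ht
    have : cnt v t ≤ (Finset.univ.filter (fun j => v j = t)).card := by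
      apply Finset.card_le_card
      intro j hj
      simp only [Finset.mem_filter] at *
      exact ⟨hj.1, ht j hj.2⟩
    exact_mod_cast this.trans (card_fiber_le_one hinj t)
  rcases eq_or_lt_of_le hα1 with h | h
  · -- α = 1 : the quantile is 0 and the values are nonnegative
    have hquniv : qSet α v = Set.univ := by
      ext x
      simp only [qSet, Set.mem_setOf_eq, Set.mem_univ, iff_true, ← h, sub_self]
      positivity
    have hQ : empQuantile α v = 0 := by
      rw [empQuantile_eq, hquniv, csInf_of_not_bddBelow not_bddBelow_univ, Real.sInf_empty]
    rw [hQ]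
    have := key 0 (fun j hj => le_antisymm hj (hv j))
    linarith
  · set m := empQuantile α v with hmdef
    set U := (Finset.univ.image v).filter (fun y => y < m) with hU
    by_cases hUne : U.Nonempty
    · have hUm : U.max' hUne < m := (Finset.mem_filter.mp (U.max'_mem hUne)).2
      set x := (U.max' hUne + m) / 2 with hxdef
      have hxm : x < m := by rw [hxdef]; linarith
      have hxnot : x ∉ qSet α v := by
        intro hmem
        have := (empQuantile_le_iff hα0 h v x).mpr hmem
        rw [← hmdef] at this
        linarith
      have hxlt : (cnt v x : ℝ) < (1 - α) * (Fintype.card ι : ℝ) := by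
        simp only [qSet, Set.mem_setOf_eq, not_le] at hxnot
        exact (div_lt_iff₀ hN).mp hxnot
      have hsub : Finset.univ.filter (fun j => v j ≤ m) ⊆
          (Finset.univ.filter (fun j => v j ≤ x)) ∪
            (Finset.univ.filter (fun j => v j = m)) := by
        intro j hj
        simp only [Finset.mem_filter, Finset.mem_union] at hj ⊢
        rcases lt_or_eq_of_le hj.2 with h' | h'
        · left
          refine ⟨hj.1, ?_⟩
          have hjU : v j ∈ U := Finset.mem_filter.mpr
            ⟨Finset.mem_image_of_mem v (Finset.mem_univ j), h'⟩
          have := U.le_max' _ hjU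
          rw [hxdef]; linarith
        · exact Or.inr ⟨hj.1, h'⟩
      have hcard : cnt v m ≤ cnt v x + 1 := by
        calc cnt v m ≤ ((Finset.univ.filter (fun j => v j ≤ x)) ∪
            (Finset.univ.filter (fun j => v j = m))).card := Finset.card_le_card hsub
          _ ≤ cnt v x + (Finset.univ.filter (fun j => v j = m)).card :=
            Finset.card_union_le _ _
          _ ≤ cnt v x + 1 := by
            have := card_fiber_le_one hinj m
            omega
      have : (cnt v m : ℝ) ≤ (cnt v x : ℝ) + 1 := by exact_mod_cast hcard
      linarith
    · have : ∀ j, v j ≤ m → v j = m := by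
        intro j hj
        rcases lt_or_eq_of_le hj with h' | h'
        · exact absurd ⟨v j, Finset.mem_filter.mpr
            ⟨Finset.mem_image_of_mem v (Finset.mem_univ j), h'⟩⟩ hUne
        · exact h'
      have := key m this
      linarith

end QuantAux


noncomputable section EquivAux

variable {K M : ℕ}

lemma branchMean_perm (z : Fin K → Fin M → ℝ) (σ : Equiv.Perm (Fin K))
    (τ : Fin K → Equiv.Perm (Fin M)) (k : Fin K) :
    branchMean (fun k i => z (σ k) (τ k i)) k = branchMean z (σ k) := by
  unfold branchMean
  congr 1
  exact Equiv.sum_comp (τ k) (z (σ k))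

lemma branchSd_perm (z : Fin K → Fin M → ℝ) (σ : Equiv.Perm (Fin K))
    (τ : Fin K → Equiv.Perm (Fin M)) (k : Fin K) :
    branchSd (fun k i => z (σ k) (τ k i)) k = branchSd z (σ k) := by
  unfold branchSd
  split
  · rfl
  · congr 2
    simp only [branchMean_perm]
    exact Equiv.sum_comp (τ k) (fun i => (z (σ k) i - branchMean z (σ k)) ^ 2)

lemma grandMean_perm (z : Fin K → Fin M → ℝ) (σ : Equiv.Perm (Fin K))
    (τ : Fin K → Equiv.Perm (Fin M)) :
    grandMean (fun k i => z (σ k) (τ k i)) = grandMean z := by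
  unfold grandMean
  congr 1
  rw [Finset.sum_congr rfl (fun k _ => branchMean_perm z σ τ k)]
  exact Equiv.sum_comp σ (branchMean z)

lemma tildeZ_perm (c : ℝ) (z : Fin K → Fin M → ℝ) (σ : Equiv.Perm (Fin K))
    (τ : Fin K → Equiv.Perm (Fin M)) (k : Fin K) (i : Fin M) :
    tildeZ c (fun k i => z (σ k) (τ k i)) k i = tildeZ c z (σ k) (τ k i) := by
  unfold tildeZ
  simp only [branchMean_perm, branchSd_perm, grandMean_perm]

lemma tildeZ_nonneg (c : ℝ) (z : Fin K → Fin M → ℝ) (k : Fin K) (i : Fin M) :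
    0 ≤ tildeZ c z k i := by
  unfold tildeZ branchSd
  apply div_nonneg (abs_nonneg _)
  split
  · norm_num
  · exact Real.sqrt_nonneg _

lemma cnt_comp_equiv {ι κ : Type*} [Fintype ι] [Fintype κ] (e : κ ≃ ι) (v : ι → ℝ)
    (x : ℝ) : cnt (v ∘ e) x = cnt v x := by
  classical
  unfold cnt
  refine Finset.card_bij (fun j _ => e j) ?_ ?_ ?_
  · intro a ha
    have := (Finset.mem_filter.mp ha).2
    exact Finset.mem_filter.mpr ⟨Finset.mem_univ _, this⟩
  · intro a _ b _ h
    exact e.injective h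
  · intro b hb
    refine ⟨e.symm b, ?_, by simp⟩
    have := (Finset.mem_filter.mp hb).2
    refine Finset.mem_filter.mpr ⟨Finset.mem_univ _, ?_⟩
    simpa using this

lemma empQuantile_comp_equiv {ι κ : Type*} [Fintype ι] [Fintype κ] (e : κ ≃ ι)
    (α : ℝ) (v : ι → ℝ) : empQuantile α (v ∘ e) = empQuantile α v := by
  rw [empQuantile_eq, empQuantile_eq]
  congr 1
  unfold qSet
  ext x
  simp only [Set.mem_setOf_eq]
  rw [cnt_comp_equiv e v x, Fintype.card_congr e]

lemma empQuantile_one {ι : Type*} [Fintype ι] (v : ι → ℝ) : empQuantile (1 : ℝ) v = 0 := by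
  rw [empQuantile_eq]
  have hquniv : qSet (1 : ℝ) v = Set.univ := by
    ext x
    simp only [qSet, Set.mem_setOf_eq, Set.mem_univ, iff_true, sub_self]
    positivity
  rw [hquniv, csInf_of_not_bddBelow not_bddBelow_univ, Real.sInf_empty]

lemma measurable_apply2 (k : Fin K) (i : Fin M) :
    Measurable (fun z : Fin K → Fin M → ℝ => z k i) :=
  (measurable_pi_apply i).comp (measurable_pi_apply k)

lemma measurable_branchMean (k : Fin K) :
    Measurable (fun z : Fin K → Fin M → ℝ => branchMean z k) := by
  unfold branchMean
  exact (Finset.measurable_sum _ (fun j _ => measurable_apply2 k j)).div_const _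

lemma measurable_branchSd (k : Fin K) :
    Measurable (fun z : Fin K → Fin M → ℝ => branchSd z k) := by
  unfold branchSd
  split
  · exact measurable_const
  · refine Real.continuous_sqrt.measurable.comp ?_
    refine Measurable.div_const ?_ _
    refine Finset.measurable_sum _ (fun j _ => ?_)
    exact ((measurable_apply2 k j).sub (measurable_branchMean k)).pow_const 2

lemma measurable_grandMean :
    Measurable (fun z : Fin K → Fin M → ℝ => grandMean z) := by
  unfold grandMean
  exact (Finset.measurable_sum _ (fun k _ => measurable_branchMean k)).div_const _

lemma measurable_tildeZ (c : ℝ) (k : Fin K) (i : Fin M) :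
    Measurable (fun z : Fin K → Fin M → ℝ => tildeZ c z k i) := by
  unfold tildeZ
  refine Measurable.div ?_ (measurable_branchSd k)
  refine Measurable.abs ?_
  refine (measurable_apply2 k i).sub ?_
  refine Measurable.ite ?_ measurable_grandMean (measurable_branchMean k)
  exact measurableSet_le ((measurable_branchMean k).sub measurable_grandMean).abs
    (((measurable_branchSd k).const_mul c).div_const _)

lemma cnt_cast {ι : Type*} [Fintype ι] (v : ι → ℝ) (x : ℝ) :
    ((cnt v x : ℕ) : ℝ) = ∑ j, if v j ≤ x then (1 : ℝ) else 0 := by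
  classical
  rw [cnt, Finset.card_filter]
  push_cast
  rfl

lemma measurable_empQuantile (hK : 1 ≤ K) (hM : 1 ≤ M) {α : ℝ} (hα0 : 0 ≤ α)
    (hα1 : α ≤ 1) (c : ℝ) :
    Measurable (fun z : Fin K → Fin M → ℝ =>
      empQuantile α (fun p : Fin K × Fin M => tildeZ c z p.1 p.2)) := by
  classical
  haveI : NeZero K := ⟨by omega⟩
  haveI : NeZero M := ⟨by omega⟩
  rcases eq_or_lt_of_le hα1 with h | h
  · subst h
    simp only [empQuantile_one]
    exact measurable_const
  · apply measurable_of_Iic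
    intro a
    have hset : (fun z : Fin K → Fin M → ℝ =>
          empQuantile α (fun p : Fin K × Fin M => tildeZ c z p.1 p.2)) ⁻¹' Set.Iic a
        = {z : Fin K → Fin M → ℝ | 1 - α ≤
            (∑ p : Fin K × Fin M, if tildeZ c z p.1 p.2 ≤ a then (1 : ℝ) else 0) /
              (Fintype.card (Fin K × Fin M) : ℝ)} := by
      ext z
      simp only [Set.mem_preimage, Set.mem_Iic, Set.mem_setOf_eq,
        empQuantile_le_iff hα0 h, qSet, Set.mem_setOf_eq, cnt_cast]
    rw [hset]
    refine measurableSet_le measurable_const ?_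
    refine Measurable.div_const ?_ _
    refine Finset.measurable_sum _ (fun p _ => ?_)
    exact Measurable.ite
      (measurableSet_le (measurable_tildeZ c p.1 p.2) measurable_const)
      measurable_const measurable_const

end EquivAux

open scoped ENNReal in
/-- two-layer hierarchical model, unsupervised SymmPI: if the array
`Z = (Z_i^{(k)})` is `Λ_{K,M}`-distributionally invariant, then
`P(Z̃_M^{(K)} ≤ Q_{1−α}((Z̃_i^{(k)})_{k,i})) ≥ 1 − α`, and if the `KM` transformed values
are a.s. pairwise distinct, this probability is at most `1 − α + 1/(KM)`. -/
theorem stmt11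
    {Ω : Type*} [MeasurableSpace Ω] (P : Measure Ω) [IsProbabilityMeasure P]
    (K M : ℕ) (hK : 1 ≤ K) (hM : 1 ≤ M)
    (α : ℝ) (hα : α ∈ Set.Icc (0 : ℝ) 1) (c : ℝ) (hc : 0 ≤ c)
    (Zv : Ω → Fin K → Fin M → ℝ) (hZ : Measurable Zv)
    -- Λ_{K,M}-distributional invariance
    (hinv : ∀ (σ : Equiv.Perm (Fin K)) (τ : Fin K → Equiv.Perm (Fin M)),
      Measure.map (fun ω => fun (k : Fin K) (i : Fin M) => Zv ω (σ k) (τ k i)) P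
        = Measure.map Zv P) :
    (1 - α ≤ (P {ω | tildeZ c (Zv ω) ⟨K - 1, Nat.sub_lt hK one_pos⟩
          ⟨M - 1, Nat.sub_lt hM one_pos⟩
        ≤ empQuantile α (fun p : Fin K × Fin M => tildeZ c (Zv ω) p.1 p.2)}).toReal) ∧
    ((∀ᵐ ω ∂P, Function.Injective
        (fun p : Fin K × Fin M => tildeZ c (Zv ω) p.1 p.2)) →
      (P {ω | tildeZ c (Zv ω) ⟨K - 1, Nat.sub_lt hK one_pos⟩
          ⟨M - 1, Nat.sub_lt hM one_pos⟩
        ≤ empQuantile α (fun p : Fin K × Fin M => tildeZ c (Zv ω) p.1 p.2)}).toReal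
        ≤ 1 - α + 1 / (K * M : ℝ)) := by
  classical
  obtain ⟨hα0, hα1⟩ := hα
  haveI : NeZero K := ⟨by omega⟩
  haveI : NeZero M := ⟨by omega⟩
  set kr : Fin K := ⟨K - 1, Nat.sub_lt hK one_pos⟩ with hkr
  set ir : Fin M := ⟨M - 1, Nat.sub_lt hM one_pos⟩ with hir
  set N : ℕ := Fintype.card (Fin K × Fin M) with hN
  have hNKM : N = K * M := by simp [hN]
  have hNpos : (0 : ℝ) < (N : ℝ) := by
    have : 0 < N := by simp [hNKM]; omega
    exact_mod_cast this
  set Qf : (Fin K → Fin M → ℝ) → ℝ :=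
    fun z => empQuantile α (fun p : Fin K × Fin M => tildeZ c z p.1 p.2) with hQf
  have hQmeas : Measurable Qf := measurable_empQuantile hK hM hα0 hα1 c
  set A : Fin K × Fin M → Set (Fin K → Fin M → ℝ) :=
    fun p => {z | tildeZ c z p.1 p.2 ≤ Qf z} with hA
  have hAm : ∀ p, MeasurableSet (A p) := fun p =>
    measurableSet_le (measurable_tildeZ c p.1 p.2) hQmeas
  set μ := Measure.map Zv P with hμ
  haveI : IsProbabilityMeasure μ := Measure.isProbabilityMeasure_map hZ.aemeasurable
  have hPev : P {ω | tildeZ c (Zv ω) kr ir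
      ≤ empQuantile α (fun p : Fin K × Fin M => tildeZ c (Zv ω) p.1 p.2)}
      = μ (A (kr, ir)) := by
    rw [hμ, Measure.map_apply hZ (hAm _)]
    rfl
  -- all positions have the same probability
  have heq : ∀ p : Fin K × Fin M, μ (A p) = μ (A (kr, ir)) := by
    intro p
    symm
    set σ : Equiv.Perm (Fin K) := Equiv.swap kr p.1 with hσ
    set τ : Fin K → Equiv.Perm (Fin M) := fun _ => Equiv.swap ir p.2 with hτ
    set g : (Fin K → Fin M → ℝ) → (Fin K → Fin M → ℝ) :=
      fun z => fun k i => z (σ k) (τ k i) with hg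
    have hgm : Measurable g := by
      apply measurable_pi_lambda
      intro k
      apply measurable_pi_lambda
      intro i
      exact measurable_apply2 (σ k) (τ k i)
    have hpre : g ⁻¹' A (kr, ir) = A p := by
      ext z
      simp only [hA, Set.mem_preimage, Set.mem_setOf_eq]
      have h1 : tildeZ c (g z) kr ir = tildeZ c z p.1 p.2 := by
        rw [hg]
        rw [tildeZ_perm c z σ τ kr ir]
        rw [hσ, hτ]
        simp [Equiv.swap_apply_left]
      have h2 : Qf (g z) = Qf z := by
        have hcomp : (fun q : Fin K × Fin M => tildeZ c (g z) q.1 q.2)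
            = (fun q : Fin K × Fin M => tildeZ c z q.1 q.2) ∘ (Equiv.prodShear σ τ) := by
          funext q
          exact tildeZ_perm c z σ τ q.1 q.2
        rw [hQf]
        simp only [hcomp]
        rw [empQuantile_comp_equiv]
      rw [h1, h2]
    calc μ (A (kr, ir))
        = (Measure.map (fun ω => fun k i => Zv ω (σ k) (τ k i)) P) (A (kr, ir)) := by
          rw [hinv σ τ]
      _ = P ((fun ω => g (Zv ω)) ⁻¹' A (kr, ir)) := Measure.map_apply (hgm.comp hZ) (hAm _)
      _ = P (Zv ⁻¹' A p) := by
          rw [show (fun ω => g (Zv ω)) ⁻¹' A (kr, ir) = Zv ⁻¹' A p from by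
            ext ω
            simp only [Set.mem_preimage]
            rw [← hpre]
            rfl]
      _ = μ (A p) := (Measure.map_apply hZ (hAm p)).symm
  -- the count viewed in ℝ≥0∞ as a sum of indicators
  have hcnt_sum : ∀ z : Fin K → Fin M → ℝ,
      ((cnt (fun p : Fin K × Fin M => tildeZ c z p.1 p.2) (Qf z) : ℕ) : ℝ≥0∞)
        = ∑ p : Fin K × Fin M, (A p).indicator (1 : (Fin K → Fin M → ℝ) → ℝ≥0∞) z := by
    intro z
    rw [cnt, Finset.card_filter]
    push_cast
    apply Finset.sum_congr rfl
    intro p _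
    rw [Set.indicator_apply]
    by_cases hzp : tildeZ c z p.1 p.2 ≤ Qf z
    · simp [hzp, hA]
    · simp [hzp, hA]
  have hsum : (N : ℝ≥0∞) * μ (A (kr, ir))
      = ∫⁻ z, ((cnt (fun p : Fin K × Fin M => tildeZ c z p.1 p.2) (Qf z) : ℕ) : ℝ≥0∞) ∂μ := by
    calc (N : ℝ≥0∞) * μ (A (kr, ir))
        = ∑ _p : Fin K × Fin M, μ (A (kr, ir)) := by
          rw [Finset.sum_const, Finset.card_univ, ← hN, nsmul_eq_mul]
      _ = ∑ p : Fin K × Fin M, μ (A p) := by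
          exact (Finset.sum_congr rfl (fun p _ => heq p)).symm
      _ = ∑ p : Fin K × Fin M, ∫⁻ z, (A p).indicator (1 : (Fin K → Fin M → ℝ) → ℝ≥0∞) z ∂μ := by
          exact Finset.sum_congr rfl (fun p _ => (lintegral_indicator_one (hAm p)).symm)
      _ = ∫⁻ z, ∑ p : Fin K × Fin M, (A p).indicator (1 : (Fin K → Fin M → ℝ) → ℝ≥0∞) z ∂μ := by
          exact (lintegral_finset_sum _
            (fun p _ => measurable_const.indicator (hAm p))).symm
      _ = _ := by
          exact lintegral_congr (fun z => (hcnt_sum z).symm)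
  have hμfin : μ (A (kr, ir)) ≠ ⊤ := measure_ne_top μ _
  constructor
  · -- lower bound
    have hlb : ENNReal.ofReal ((1 - α) * (N : ℝ)) ≤ (N : ℝ≥0∞) * μ (A (kr, ir)) := by
      rw [hsum]
      have : ENNReal.ofReal ((1 - α) * (N : ℝ))
          = ∫⁻ _z, ENNReal.ofReal ((1 - α) * (N : ℝ)) ∂μ := by
        rw [lintegral_const, measure_univ, mul_one]
      rw [this]
      apply lintegral_mono
      intro z
      have hz := cnt_quantile_lb (ι := Fin K × Fin M) hα0 hα1
        (fun p => tildeZ c z p.1 p.2)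
      calc ENNReal.ofReal ((1 - α) * (N : ℝ))
          ≤ ENNReal.ofReal ((cnt (fun p : Fin K × Fin M => tildeZ c z p.1 p.2) (Qf z) : ℝ)) :=
            ENNReal.ofReal_le_ofReal hz
        _ = _ := ENNReal.ofReal_natCast _
    have h1 : (1 - α) * (N : ℝ) ≤ (N : ℝ) * (μ (A (kr, ir))).toReal := by
      have hfin : (N : ℝ≥0∞) * μ (A (kr, ir)) ≠ ⊤ :=
        ENNReal.mul_ne_top (ENNReal.natCast_ne_top N) hμfin
      have := ENNReal.toReal_mono hfin hlb
      rwa [ENNReal.toReal_ofReal (mul_nonneg (by linarith) hNpos.le),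
        ENNReal.toReal_mul, ENNReal.toReal_natCast] at this
    rw [hPev]
    nlinarith [hNpos]
  · -- upper bound
    intro hinj
    have hSmeas : MeasurableSet {z : Fin K → Fin M → ℝ |
        Function.Injective (fun p : Fin K × Fin M => tildeZ c z p.1 p.2)} := by
      have hset : {z : Fin K → Fin M → ℝ |
          Function.Injective (fun p : Fin K × Fin M => tildeZ c z p.1 p.2)}
          = ⋂ (p : Fin K × Fin M) (q : Fin K × Fin M) (_ : p ≠ q),
              {z | tildeZ c z p.1 p.2 = tildeZ c z q.1 q.2}ᶜ := by
        ext z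
        simp only [Set.mem_iInter, Set.mem_setOf_eq, Set.mem_compl_iff, Function.Injective]
        constructor
        · intro h p q hpq hval
          exact hpq (h hval)
        · intro h p q hval
          by_contra hne
          exact h p q hne hval
      rw [hset]
      refine MeasurableSet.iInter (fun p => MeasurableSet.iInter (fun q =>
        MeasurableSet.iInter (fun _ => ?_)))
      exact (measurableSet_eq_fun (measurable_tildeZ c p.1 p.2)
        (measurable_tildeZ c q.1 q.2)).compl
    have hinjμ : ∀ᵐ z ∂μ, Function.Injective
        (fun p : Fin K × Fin M => tildeZ c z p.1 p.2) := by
      rw [hμ, ae_map_iff hZ.aemeasurable hSmeas]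
      exact hinj
    have hub : (N : ℝ≥0∞) * μ (A (kr, ir)) ≤ ENNReal.ofReal ((1 - α) * (N : ℝ) + 1) := by
      rw [hsum]
      calc ∫⁻ z, ((cnt (fun p : Fin K × Fin M => tildeZ c z p.1 p.2) (Qf z) : ℕ) : ℝ≥0∞) ∂μ
          ≤ ∫⁻ _z, ENNReal.ofReal ((1 - α) * (N : ℝ) + 1) ∂μ := by
            apply lintegral_mono_ae
            filter_upwards [hinjμ] with z hz
            have hcu := cnt_quantile_ub (ι := Fin K × Fin M) hα0 hα1
              (fun p => tildeZ c z p.1 p.2) hz (fun p => tildeZ_nonneg c z p.1 p.2)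
            calc ((cnt (fun p : Fin K × Fin M => tildeZ c z p.1 p.2) (Qf z) : ℕ) : ℝ≥0∞)
                = ENNReal.ofReal
                    ((cnt (fun p : Fin K × Fin M => tildeZ c z p.1 p.2) (Qf z) : ℝ)) :=
                  (ENNReal.ofReal_natCast _).symm
              _ ≤ _ := ENNReal.ofReal_le_ofReal hcu
        _ = ENNReal.ofReal ((1 - α) * (N : ℝ) + 1) := by
            rw [lintegral_const, measure_univ, mul_one]
    have h1 : (N : ℝ) * (μ (A (kr, ir))).toReal ≤ (1 - α) * (N : ℝ) + 1 := by
      have hfin : ENNReal.ofReal ((1 - α) * (N : ℝ) + 1) ≠ ⊤ := ENNReal.ofReal_ne_top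
      have := ENNReal.toReal_mono hfin hub
      rwa [ENNReal.toReal_ofReal (by nlinarith [mul_nonneg (show (0:ℝ) ≤ 1 - α by linarith) hNpos.le]),
        ENNReal.toReal_mul, ENNReal.toReal_natCast] at this
    rw [hPev]
    have hKM : ((K : ℝ) * (M : ℝ)) = (N : ℝ) := by
      rw [hNKM]
      push_cast
      ring
    rw [show (1 : ℝ) - α + 1 / ((K : ℝ) * (M : ℝ)) = 1 - α + 1 / (N : ℝ) by rw [hKM]]
    have h2 : (μ (A (kr, ir))).toReal ≤ ((1 - α) * (N : ℝ) + 1) / (N : ℝ) := by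
      rw [le_div_iff₀ hNpos]
      linarith
    refine h2.trans (le_of_eq ?_)
    field_simp
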